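/- Fixed-point lemma for ultrafilters: if U is an ultrafilter on X and f : X → X satisfies f_*(U) = U, then the set {x ∈ X : f(x) = x} belongs to U. -/

import Mathlib

open Classical in
private lemma build_ext {X : Type*} (f : X → X) (S : Set X) (c : X → Fin 3)
    (x₀ : X) (o : ℕ → X) (k : ℕ) (hk : 0 < k)
    (ho : ∀ n, f (o n) = o (n + 1)) (ho0 : o 0 = x₀)
    (hnS : ∀ i < k, o i ∉ S)
    (col : ℕ → Fin 3)
    (hcol : ∀ i, i + 1 < k → col (i + 1) ≠ col i)
    (hinj : ∀ i < k, ∀ j < k, o i = o j → i = j)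
    (hend : (o k ∈ S ∧ c (o k) ≠ col (k - 1)) ∨
      (∃ j < k, o j = o k ∧ (j = k - 1 ∨ col j ≠ col (k - 1)))) :
    ∃ (T : Set X) (d : X → Fin 3), x₀ ∈ T ∧ (∀ y ∈ T, y ∉ S) ∧
      (∀ y ∈ T, f y ∈ S ∪ T) ∧
      ∀ y ∈ T, f y ≠ y → (if f y ∈ S then c (f y) else d (f y)) ≠ d y := by
  classical
  set d : X → Fin 3 := fun y => if h : ∃ i, i < k ∧ o i = y then col (Nat.find h) else 0 with hdd
  have hd : ∀ i < k, d (o i) = col i := by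
    intro i hi
    have hex : ∃ n, n < k ∧ o n = o i := ⟨i, hi, rfl⟩
    simp only [hdd, dif_pos hex]
    congr 1
    exact hinj _ (Nat.find_spec hex).1 _ hi (Nat.find_spec hex).2
  refine ⟨o '' Set.Iio k, d, ⟨0, hk, ho0⟩, ?_, ?_, ?_⟩
  · rintro y ⟨i, hi, rfl⟩
    exact hnS i hi
  · rintro y ⟨i, hi, rfl⟩
    simp only [Set.mem_Iio] at hi
    rw [ho]
    rcases Nat.lt_or_ge (i + 1) k with h1 | h1
    · exact Or.inr ⟨i + 1, h1, rfl⟩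
    · have hik : i + 1 = k := le_antisymm hi h1
      rw [hik]
      rcases hend with ⟨hS', _⟩ | ⟨j, hjk, hje, _⟩
      · exact Or.inl hS'
      · exact Or.inr ⟨j, hjk, hje⟩
  · rintro y ⟨i, hi, rfl⟩ hne
    simp only [Set.mem_Iio] at hi
    rw [ho] at hne ⊢
    rw [hd i hi]
    rcases Nat.lt_or_ge (i + 1) k with h1 | h1
    · rw [if_neg (hnS _ h1), hd _ h1]
      exact hcol i h1
    · have hik : i + 1 = k := le_antisymm hi h1
      have hik1 : i = k - 1 := by omega
      rw [hik]
      rcases hend with ⟨hS', hne'⟩ | ⟨j, hjk, hje, hor⟩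
      · rw [if_pos hS', hik1]
        exact hne'
      · have hjS : o k ∉ S := hje ▸ hnS j hjk
        rw [if_neg hjS, ← hje, hd j hjk]
        rcases hor with rfl | hcc
        · exfalso; apply hne; rw [hik, ← hje, hik1]
        · rw [hik1]; exact hcc


open Fin.NatCast in
private lemma aux1 (a : Fin 3) {m n : ℕ} (h : m % 2 ≠ n % 2) :
    a + ((m % 2 + 1 : ℕ) : Fin 3) ≠ a + ((n % 2 + 1 : ℕ) : Fin 3) := by
  rcases Nat.mod_two_eq_zero_or_one m with hm | hm <;>
    rcases Nat.mod_two_eq_zero_or_one n with hn | hn <;>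
      rw [hm, hn] <;>
        first
        | exact absurd (hm.trans hn.symm) h
        | (intro hh; exact absurd (add_left_cancel hh) (by decide))

open Fin.NatCast in
private lemma aux2 (a : Fin 3) (m : ℕ) : a + ((m % 2 + 1 : ℕ) : Fin 3) ≠ a := by
  rcases Nat.mod_two_eq_zero_or_one m with hm | hm <;> rw [hm] <;> intro hh <;>
    · have h2 := add_eq_left.mp hh
      exact absurd h2 (by decide)

open Fin.NatCast in
private lemma aux3 {m n : ℕ} (h : m % 2 ≠ n % 2) :
    ((m % 2 : ℕ) : Fin 3) ≠ ((n % 2 : ℕ) : Fin 3) := by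
  rcases Nat.mod_two_eq_zero_or_one m with hm | hm <;>
    rcases Nat.mod_two_eq_zero_or_one n with hn | hn <;> rw [hm, hn] <;>
      first
      | exact absurd (hm.trans hn.symm) h
      | decide

open Fin.NatCast in
private lemma aux4 (m n : ℕ) (h : m % 2 = n % 2) :
    ((m % 2 + 1 : ℕ) : Fin 3) ≠ ((n % 2 : ℕ) : Fin 3) := by
  have hn : n % 2 = m % 2 := h.symm
  rcases Nat.mod_two_eq_zero_or_one m with hm | hm <;> rw [hm] at hn ⊢ <;> rw [hn] <;> decide

open Fin.NatCast in
private lemma aux5 (m n : ℕ) (h : n % 2 = 0) :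
    ((m % 2 + 1 : ℕ) : Fin 3) ≠ ((n % 2 : ℕ) : Fin 3) := by
  rcases Nat.mod_two_eq_zero_or_one m with hm | hm <;> rw [hm, h] <;> decide

open Fin.NatCast in
open Classical in
private lemma extend_coloring {X : Type*} (f : X → X) (S : Set X) (c : X → Fin 3)
    (x₀ : X) (hx₀ : x₀ ∉ S) :
    ∃ (T : Set X) (d : X → Fin 3), x₀ ∈ T ∧ (∀ y ∈ T, y ∉ S) ∧
      (∀ y ∈ T, f y ∈ S ∪ T) ∧
      ∀ y ∈ T, f y ≠ y → (if f y ∈ S then c (f y) else d (f y)) ≠ d y := by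
  classical
  set o : ℕ → X := fun n => f^[n] x₀ with hoo
  have ho : ∀ n, f (o n) = o (n + 1) := fun n =>
    (Function.iterate_succ_apply' f n x₀).symm
  have ho0 : o 0 = x₀ := rfl
  by_cases hstop : ∃ k, o k ∈ S ∨ ∃ j < k, o j = o k
  · -- the orbit hits S or repeats
    set k := Nat.find hstop with hkk
    have hkspec : o k ∈ S ∨ ∃ j < k, o j = o k := Nat.find_spec hstop
    have hmin : ∀ i < k, o i ∉ S ∧ ∀ j < i, o j ≠ o i := by
      intro i hi
      have := Nat.find_min hstop hi
      push_neg at this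
      exact this
    have hnS : ∀ i < k, o i ∉ S := fun i hi => (hmin i hi).1
    have hinj : ∀ i < k, ∀ j < k, o i = o j → i = j := by
      intro i hi j hj hij
      rcases Nat.lt_trichotomy i j with h | h | h
      · exact absurd hij ((hmin j hj).2 i h)
      · exact h
      · exact absurd hij.symm ((hmin i hi).2 j h)
    have hk : 0 < k := by
      rcases Nat.eq_zero_or_pos k with h0 | h0
      · exfalso
        rw [h0] at hkspec
        rcases hkspec with h | ⟨j, hj, _⟩
        · exact hx₀ h
        · omega
      · exact h0
    by_cases hA : o k ∈ S
    · -- Case A: orbit enters S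
      set col : ℕ → Fin 3 :=
        fun i => c (o k) + (((k - i + 1) % 2 + 1 : ℕ) : Fin 3) with hcolc
      refine build_ext f S c x₀ o k hk ho ho0 hnS col ?_ hinj (Or.inl ⟨hA, ?_⟩)
      · intro i h1
        simp only [hcolc]
        exact aux1 _ (by omega)
      · simp only [hcolc]
        exact (aux2 _ _).symm
    · -- Case B: orbit repeats without entering S
      obtain ⟨j, hjk, hje⟩ : ∃ j < k, o j = o k := hkspec.resolve_left hA
      set cyc : ℕ → Fin 3 := fun i =>
        if i = k - 1 then (((k - j) % 2 + 1 : ℕ) : Fin 3)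
        else (((i - j) % 2 : ℕ) : Fin 3) with hcyc
      set col : ℕ → Fin 3 := fun i =>
        if i < j then cyc j + (((j - i + 1) % 2 + 1 : ℕ) : Fin 3) else cyc i
        with hcolc
      refine build_ext f S c x₀ o k hk ho ho0 hnS col ?_ hinj
        (Or.inr ⟨j, hjk, hje, ?_⟩)
      · intro i h1
        simp only [hcolc]
        rcases Nat.lt_or_ge i j with hij | hij
        · rcases Nat.lt_or_ge (i + 1) j with hij1 | hij1
          · rw [if_pos hij1, if_pos hij]
            exact aux1 _ (by omega)
          · have hj1 : i + 1 = j := by omega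
            rw [if_neg (by omega), if_pos hij, hj1]
            exact (aux2 _ _).symm
        · -- cycle part
          rw [if_neg (by omega), if_neg (by omega)]
          simp only [hcyc]
          rcases Nat.lt_or_ge (i + 1) (k - 1) with hik1 | hik1
          · rw [if_neg (by omega), if_neg (by omega)]
            exact aux3 (by omega)
          · have hik2 : i + 1 = k - 1 := by omega
            rw [if_pos hik2, if_neg (by omega)]
            exact aux4 _ _ (by omega)
      · -- endpoint condition
        by_cases hjk1 : j = k - 1
        · exact Or.inl hjk1
        · refine Or.inr ?_
          simp only [hcolc]
          rw [if_neg (by omega), if_neg (by omega)]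
          simp only [hcyc]
          rw [if_neg hjk1, if_true]
          exact (aux5 _ _ (by omega)).symm
  · -- Case C: orbit injective, never enters S
    push_neg at hstop
    have hnS : ∀ n, o n ∉ S := fun n => (hstop n).1
    have hinj : Function.Injective o := by
      intro a b hab
      by_contra hne
      rcases Nat.lt_trichotomy a b with h | h | h
      · exact (hstop b).2 a h hab
      · exact hne h
      · exact (hstop a).2 b h hab.symm
    set d : X → Fin 3 := fun y =>
      if h : ∃ i, o i = y then (((Nat.find h) % 2 : ℕ) : Fin 3) else 0 with hdd
    have hd : ∀ i, d (o i) = ((i % 2 : ℕ) : Fin 3) := by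
      intro i
      have hex : ∃ n, o n = o i := ⟨i, rfl⟩
      simp only [hdd, dif_pos hex]
      congr 2
      exact hinj (Nat.find_spec hex)
    refine ⟨Set.range o, d, ⟨0, ho0⟩, ?_, ?_, ?_⟩
    · rintro y ⟨i, rfl⟩
      exact hnS i
    · rintro y ⟨i, rfl⟩
      rw [ho]
      exact Or.inr ⟨i + 1, rfl⟩
    · rintro y ⟨i, rfl⟩ hne
      rw [ho, if_neg (hnS _), hd, hd]
      exact aux3 (by omega)

private lemma exists_coloring {X : Type*} (f : X → X) :
    ∃ c : X → Fin 3, ∀ x, f x ≠ x → c (f x) ≠ c x := by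
  classical
  set P : Set (Set (X × Fin 3)) := {G |
    (∀ x a b, (x, a) ∈ G → (x, b) ∈ G → a = b) ∧
    (∀ x a, (x, a) ∈ G → ∃ b, (f x, b) ∈ G) ∧
    (∀ x a b, (x, a) ∈ G → (f x, b) ∈ G → f x ≠ x → b ≠ a)} with hP
  obtain ⟨M, hM⟩ := zorn_subset P (by
    intro ch hchP hchain
    refine ⟨⋃₀ ch, ⟨?_, ?_, ?_⟩, fun s hs => Set.subset_sUnion_of_mem hs⟩
    · rintro x a b ⟨G1, hG1, ha⟩ ⟨G2, hG2, hb⟩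
      rcases hchain.total hG1 hG2 with hsub | hsub
      · exact (hchP hG2).1 x a b (hsub ha) hb
      · exact (hchP hG1).1 x a b ha (hsub hb)
    · rintro x a ⟨G1, hG1, ha⟩
      obtain ⟨b, hb⟩ := (hchP hG1).2.1 x a ha
      exact ⟨b, G1, hG1, hb⟩
    · rintro x a b ⟨G1, hG1, ha⟩ ⟨G2, hG2, hb⟩ hne
      rcases hchain.total hG1 hG2 with hsub | hsub
      · exact (hchP hG2).2.2 x a b (hsub ha) hb hne
      · exact (hchP hG1).2.2 x a b ha (hsub hb) hne)
  have hMP : M ∈ P := hM.1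
  set S : Set X := {x | ∃ a, (x, a) ∈ M} with hS
  set c : X → Fin 3 := fun x => if h : ∃ a, (x, a) ∈ M then h.choose else 0 with hc
  have hcM : ∀ x ∈ S, (x, c x) ∈ M := by
    intro x hx
    have hx' : ∃ a, (x, a) ∈ M := hx
    simp only [hc]
    rw [dif_pos hx']
    exact hx'.choose_spec
  have hSc : ∀ x ∈ S, f x ∈ S := by
    rintro x ⟨a, ha⟩
    exact hMP.2.1 x a ha
  have hcval : ∀ x ∈ S, f x ≠ x → c (f x) ≠ c x := by
    intro x hx hne
    exact hMP.2.2 x (c x) (c (f x)) (hcM x hx) (hcM (f x) (hSc x hx)) hne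
  have hSuniv : ∀ x, x ∈ S := by
    intro x₀
    by_contra hx₀
    obtain ⟨T, d, hx₀T, hdis, hclo, hval⟩ := extend_coloring f S c x₀ hx₀
    set M' : Set (X × Fin 3) := M ∪ {p | p.1 ∈ T ∧ p.2 = d p.1} with hM'
    have hM'P : M' ∈ P := by
      refine ⟨?_, ?_, ?_⟩
      · rintro x a b (ha | ⟨haT, hae⟩) (hb | ⟨hbT, hbe⟩)
        · exact hMP.1 x a b ha hb
        · exact absurd ⟨a, ha⟩ (hdis x hbT)
        · exact absurd ⟨b, hb⟩ (hdis x haT)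
        · exact hae.trans hbe.symm
      · rintro x a (ha | ⟨haT, hae⟩)
        · exact ⟨c (f x), Or.inl (hcM (f x) (hSc x ⟨a, ha⟩))⟩
        · rcases hclo x haT with hfS | hfT
          · exact ⟨c (f x), Or.inl (hcM (f x) hfS)⟩
          · exact ⟨d (f x), Or.inr ⟨hfT, rfl⟩⟩
      · rintro x a b (ha | ⟨haT, hae⟩) (hb | ⟨hbT, hbe⟩) hne
        · exact hMP.2.2 x a b ha hb hne
        · exact absurd (hSc x ⟨a, ha⟩) (hdis (f x) hbT)
        · dsimp only at hae
          have hfS : f x ∈ S := ⟨b, hb⟩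
          have hbc : b = c (f x) := hMP.1 (f x) b (c (f x)) hb (hcM (f x) hfS)
          have hv := hval x haT hne
          rw [if_pos hfS] at hv
          rw [hbc, hae]
          exact hv
        · dsimp only at hae hbe
          have hv := hval x haT hne
          rw [if_neg (hdis (f x) hbT)] at hv
          rw [hbe, hae]
          exact hv
    have hsub : M ⊆ M' := Set.subset_union_left
    have : M' ⊆ M := hM.2 hM'P hsub
    have : (x₀, d x₀) ∈ M := this (Or.inr ⟨hx₀T, rfl⟩)
    exact hx₀ ⟨d x₀, this⟩
  exact ⟨c, fun x => hcval x (hSuniv x)⟩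

/-- Fixed-point lemma for ultrafilters: if `f_*(U) = U` then `f` has `U`-many fixed points. -/
theorem ultrafilter_fixed_points {X : Type*} (U : Ultrafilter X) (f : X → X)
    (h : Ultrafilter.map f U = U) : {x : X | f x = x} ∈ U := by
  classical
  obtain ⟨c, hc⟩ := exists_coloring f
  by_contra hfix
  have hD : {x : X | f x = x}ᶜ ∈ U := Ultrafilter.compl_mem_iff_notMem.mpr hfix
  have hi : ∃ i : Fin 3, c ⁻¹' {i} ∈ U := by
    by_contra hno
    push_neg at hno
    have h1 : ∀ i : Fin 3, (c ⁻¹' {i})ᶜ ∈ U := fun i =>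
      Ultrafilter.compl_mem_iff_notMem.mpr (hno i)
    have h2 : (⋂ i : Fin 3, (c ⁻¹' {i})ᶜ) ∈ U := Filter.iInter_mem.mpr h1
    obtain ⟨x, hx⟩ := Ultrafilter.nonempty_of_mem h2
    have := Set.mem_iInter.mp hx (c x)
    exact this rfl
  obtain ⟨i, hA⟩ := hi
  have hfA : f ⁻¹' (c ⁻¹' {i}) ∈ U := by
    have : c ⁻¹' {i} ∈ Ultrafilter.map f U := h.symm ▸ hA
    exact Ultrafilter.mem_map.mp this
  have h3 : ({x : X | f x = x}ᶜ ∩ (c ⁻¹' {i} ∩ f ⁻¹' (c ⁻¹' {i}))) ∈ U :=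
    Filter.inter_mem hD (Filter.inter_mem hA hfA)
  obtain ⟨x, hx1, hx2, hx3⟩ := Ultrafilter.nonempty_of_mem h3
  exact hc x hx1 (hx3.trans hx2.symm)
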